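/- arXiv:1508.02559 — 2 statements merged into one kernel-verified Lean document; each statement's English description precedes it below -/
import Mathlib

section
/- For every finite simple graph G with maximum degree Δ > 1, π(G) ≤ π_ℓ(G) ≤ ⌈(1 + 1/(Δ^{1/3} − 1) + 1/Δ^{1/3})·Δ²⌉. -/
open SimpleGraph

/-- A vertex colouring `φ` of `G` is nonrepetitive if for no path of `G` the sequence of
colours along its vertices is a repetition, i.e. of the form `l ++ l` with `l` nonempty. -/
def Nonrepetitive {V β : Type*} (G : SimpleGraph V) (φ : V → β) : Prop :=
  ∀ ⦃u v : V⦄ (p : G.Walk u v), p.IsPath →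
    ∀ l : List β, l ≠ [] → p.support.map φ ≠ l ++ l

/-- The Thue chromatic number of `G`: the least number of colours in a nonrepetitive
vertex colouring of `G`. -/
noncomputable def thueNumber {V : Type*} (G : SimpleGraph V) : ℕ :=
  sInf {k | ∃ φ : V → Fin k, Nonrepetitive G φ}

/-- The Thue choice number of `G`: the least `k` such that from any assignment of lists of
size at least `k` to the vertices one can choose a nonrepetitive vertex colouring. -/
noncomputable def thueChoiceNumber {V : Type*} (G : SimpleGraph V) : ℕ :=
  sInf {k | ∀ L : V → Finset ℕ, (∀ v, k ≤ (L v).card) →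
    ∃ φ : V → ℕ, (∀ v, φ v ∈ L v) ∧ Nonrepetitive G φ}

/-!
Rosenfeld's counting argument. Fix lists of size `k` and let `C(A)` be the set of nonrepetitive
list colourings of `A ⊆ V`. By induction on `A`, `|C(A)| ≥ γ |C(A \ {v})|` for `v ∈ A`. Indeed, a
bad extension of `ψ ∈ C(A \ {v})` to `v` creates a square path `a ++ b` through `v`, with `v ∈ a`
after reversal; it is determined by its restriction to `A \ {v}` minus the `n - 1` vertices of `b`
other than the partner of `v`, where `n = |a|`. Iterating the induction hypothesis, each of the at
most `n Δ^(2n-1)` walks of length `2n` through `v` thus carries at most `|C(A \ {v})| / γ^(n-1)`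
bad extensions, so `|C(A)| ≥ (k - Σₙ n Δ^(2n-1) / γ^(n-1)) |C(A \ {v})|`. For
`γ = (1 + 1/(Δ^(1/3) - 1)) Δ²` the series is at most `Δ² / Δ^(1/3)`.
-/

open Finset

section Squares

variable {V β : Type*} (G : SimpleGraph V)

def IsSquareIn (A : Finset V) (φ : V → β) (a b : List V) : Prop :=
  a ≠ [] ∧ (a ++ b).IsChain G.Adj ∧ (a ++ b).Nodup ∧ (∀ x ∈ a ++ b, x ∈ A) ∧ a.map φ = b.map φ

def NonrepetitiveOn (A : Finset V) (φ : V → β) : Prop :=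
  ∀ a b, ¬ IsSquareIn G A φ a b

variable {G} {A B : Finset V} {φ ψ : V → β} {a b : List V}

theorem IsSquareIn.length_eq (h : IsSquareIn G A φ a b) : a.length = b.length := by
  simpa using congrArg List.length h.2.2.2.2

theorem IsSquareIn.reverse (h : IsSquareIn G A φ a b) :
    IsSquareIn G A φ b.reverse a.reverse := by
  have hb : b ≠ [] := by
    rw [← List.length_pos_iff, ← h.length_eq, List.length_pos_iff]
    exact h.1
  obtain ⟨-, hchain, hnodup, hA, hmap⟩ := h
  refine ⟨by simpa using hb, ?_, ?_, ?_, by simp [List.map_reverse, hmap]⟩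
  · rw [← List.reverse_append, List.isChain_reverse]
    exact hchain.imp fun _ _ h => h.symm
  · rw [← List.reverse_append]
    exact List.nodup_reverse.2 hnodup
  · simpa [or_comm] using hA

theorem IsSquareIn.mono (h : IsSquareIn G A φ a b) (hAB : A ⊆ B) : IsSquareIn G B φ a b :=
  ⟨h.1, h.2.1, h.2.2.1, fun x hx => hAB (h.2.2.2.1 x hx), h.2.2.2.2⟩

theorem IsSquareIn.congr (h : IsSquareIn G A φ a b) (hφψ : ∀ x ∈ A, φ x = ψ x) :
    IsSquareIn G A ψ a b := by
  obtain ⟨ha, hchain, hnodup, hA, hmap⟩ := h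
  refine ⟨ha, hchain, hnodup, hA, ?_⟩
  have hφψ' : ∀ l : List V, (∀ x ∈ l, x ∈ A) → l.map φ = l.map ψ := fun l hl =>
    List.map_inj_left.2 fun x hx => hφψ x (hl x hx)
  rw [← hφψ' a fun x hx => hA x (List.mem_append_left b hx),
    ← hφψ' b fun x hx => hA x (List.mem_append_right a hx), hmap]

theorem NonrepetitiveOn.mono (h : NonrepetitiveOn G B φ) (hAB : A ⊆ B) : NonrepetitiveOn G A φ :=
  fun a b hab => h a b (hab.mono hAB)

theorem NonrepetitiveOn.congr (h : NonrepetitiveOn G A φ) (hφψ : ∀ x ∈ A, φ x = ψ x) :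
    NonrepetitiveOn G A ψ :=
  fun a b hab => h a b (hab.congr fun x hx => (hφψ x hx).symm)

theorem nonrepetitiveOn_empty : NonrepetitiveOn G ∅ φ := by
  rintro (_ | ⟨x, a⟩) b ⟨ha, -, -, hA, -⟩
  · exact ha rfl
  · simpa using hA x (by simp)

theorem NonrepetitiveOn.nonrepetitive [Fintype V] (h : NonrepetitiveOn G univ φ) :
    Nonrepetitive G φ := by
  intro u v p hp l hl hsupp
  have htake : (p.support.take l.length).map φ = l := by
    rw [List.map_take, hsupp, List.take_left]
  have hdrop : (p.support.drop l.length).map φ = l := by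
    rw [List.map_drop, hsupp, List.drop_left]
  refine h (p.support.take l.length) (p.support.drop l.length) ⟨?_, ?_, ?_, by simp, ?_⟩
  · exact fun hnil => hl (by simpa [hnil] using htake.symm)
  · rw [List.take_append_drop]; exact p.isChain_adj_support
  · rw [List.take_append_drop]; exact hp.support_nodup
  · rw [htake, hdrop]

variable {φ₁ φ₂ : V → β}

theorem IsSquareIn.ne_of_mem (h : IsSquareIn G A φ a b) {x y : V} (hx : x ∈ a) (hy : y ∈ b) :
    x ≠ y :=
  (List.nodup_append.1 h.2.2.1).2.2 x hx y hy

theorem IsSquareIn.apply_eq (h : IsSquareIn G A φ a b) {j : ℕ} {x y : V} (hx : a[j]? = some x)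
    (hy : b[j]? = some y) : φ x = φ y := by
  simpa [hx, hy] using congrArg (·[j]?) h.2.2.2.2

theorem IsSquareIn.eqOn_right (h₁ : IsSquareIn G A φ₁ a b) (h₂ : IsSquareIn G A φ₂ a b)
    (ha : ∀ x ∈ a, φ₁ x = φ₂ x) : ∀ y ∈ b, φ₁ y = φ₂ y := by
  rw [← List.map_inj_left, ← h₁.2.2.2.2, ← h₂.2.2.2.2, List.map_inj_left]
  exact ha

variable [DecidableEq V]

/-- The colour of `v` is repeated at its partner `w`, and the colours on `b` repeat those on `a`. -/
theorem IsSquareIn.update_injective {ψ₁ ψ₂ : V → β} {c₁ c₂ : β} {v w : V} {j : ℕ}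
    (hv : a[j]? = some v) (hw : b[j]? = some w)
    (h₁ : IsSquareIn G A (Function.update ψ₁ v c₁) a b)
    (h₂ : IsSquareIn G A (Function.update ψ₂ v c₂) a b)
    (hoff : ∀ u ∉ b.toFinset.erase w, ψ₁ u = ψ₂ u) : ψ₁ = ψ₂ ∧ c₁ = c₂ := by
  have hva : v ∈ a := List.mem_of_getElem? hv
  have hvb : v ∉ b := fun hvb => h₁.ne_of_mem hva hvb rfl
  have hwv : w ≠ v := (h₁.ne_of_mem hva (List.mem_of_getElem? hw)).symm
  have hc : c₁ = c₂ := by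
    have e₁ := h₁.apply_eq hv hw
    have e₂ := h₂.apply_eq hv hw
    simp only [Function.update_self, Function.update_of_ne hwv] at e₁ e₂
    rw [e₁, e₂, hoff w (by simp)]
  have ha : ∀ x ∈ a, Function.update ψ₁ v c₁ x = Function.update ψ₂ v c₂ x := by
    intro x hx
    rcases eq_or_ne x v with rfl | hxv
    · simp [hc]
    · simp only [Function.update_of_ne hxv]
      exact hoff x fun hxS => h₁.ne_of_mem hx (List.mem_toFinset.1 (mem_of_mem_erase hxS)) rfl
  refine ⟨funext fun u => ?_, hc⟩
  by_cases hu : u ∈ b.toFinset.erase w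
  · have hub : u ∈ b := List.mem_toFinset.1 (mem_of_mem_erase hu)
    have huv : u ≠ v := by rintro rfl; exact hvb hub
    simpa [Function.update_of_ne huv] using h₁.eqOn_right h₂ ha u hub
  · exact hoff u hu

end Squares

section ListColorings

variable {V : Type*} [Fintype V] [DecidableEq V] (G : SimpleGraph V) (L : V → Finset ℕ)

/-- The nonrepetitive colourings of `A` from the lists `L`, normalised to `0` outside `A` so that
they form a finite set. -/
noncomputable def listColorings (A : Finset V) : Finset (V → ℕ) :=
  open Classical in
  {φ ∈ Fintype.piFinset fun u => if u ∈ A then L u else {0} | NonrepetitiveOn G A φ}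

variable {G L} {A B : Finset V} {φ ψ : V → ℕ} {v : V} {c : ℕ}

theorem mem_listColorings :
    φ ∈ listColorings G L A ↔
      (∀ u ∈ A, φ u ∈ L u) ∧ (∀ u ∉ A, φ u = 0) ∧ NonrepetitiveOn G A φ := by
  simp only [listColorings, mem_filter, Fintype.mem_piFinset]
  refine ⟨fun ⟨hφ, hnr⟩ => ⟨fun u hu => ?_, fun u hu => ?_, hnr⟩,
    fun ⟨hA, hnA, hnr⟩ => ⟨fun u => ?_, hnr⟩⟩
  · simpa [hu] using hφ u
  · simpa [hu] using hφ u
  · by_cases hu : u ∈ A <;> simp [hu, hA, hnA]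

theorem zero_mem_listColorings_empty : 0 ∈ listColorings G L ∅ :=
  mem_listColorings.2 ⟨by simp, fun _ _ => rfl, nonrepetitiveOn_empty⟩

theorem piecewise_mem_listColorings (hφ : φ ∈ listColorings G L A) (hBA : B ⊆ A) :
    B.piecewise φ 0 ∈ listColorings G L B := by
  obtain ⟨hL, -, hnr⟩ := mem_listColorings.1 hφ
  refine mem_listColorings.2 ⟨fun u hu => ?_, fun u hu => ?_, ?_⟩
  · simpa [hu] using hL u (hBA hu)
  · simp [hu]
  · exact (hnr.mono hBA).congr fun u hu => (B.piecewise_eq_of_mem φ 0 hu).symm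

theorem update_mem_listColorings (hψ : ψ ∈ listColorings G L (A.erase v)) (hc : c ∈ L v)
    (hv : v ∈ A) (hnr : NonrepetitiveOn G A (Function.update ψ v c)) :
    Function.update ψ v c ∈ listColorings G L A := by
  obtain ⟨hL, hzero, -⟩ := mem_listColorings.1 hψ
  refine mem_listColorings.2 ⟨fun u hu => ?_, fun u hu => ?_, hnr⟩
  · rcases eq_or_ne u v with rfl | huv
    · simpa using hc
    · simpa [huv] using hL u (mem_erase.2 ⟨huv, hu⟩)
  · have huv : u ≠ v := by rintro rfl; exact hu hv
    simpa [huv] using hzero u (by simp [hu])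

theorem injOn_update_listColorings :
    Set.InjOn (fun p : (V → ℕ) × ℕ => Function.update p.1 v p.2)
      (listColorings G L (A.erase v) ×ˢ L v : Finset _) := by
  rintro ⟨ψ₁, c₁⟩ h₁ ⟨ψ₂, c₂⟩ h₂ heq
  simp only [coe_product, Set.mem_prod, mem_coe] at h₁ h₂
  have hv₁ := (mem_listColorings.1 h₁.1).2.1 v (by simp)
  have hv₂ := (mem_listColorings.1 h₂.1).2.1 v (by simp)
  have hψ : ψ₁ = ψ₂ := by
    rw [← Function.update_eq_self v ψ₁, ← Function.update_eq_self v ψ₂, hv₁, hv₂]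
    simpa using congrArg (Function.update · v 0) heq
  have hc : c₁ = c₂ := by simpa using congrFun heq v
  rw [hψ, hc]

end ListColorings

theorem pow_card_sdiff_mul_le {α : Type*} [DecidableEq α] {f : Finset α → ℝ} {γ : ℝ}
    (hγ : 0 ≤ γ) {A B : Finset α} (hf : ∀ D ⊆ A, ∀ u ∈ D, γ * f (D.erase u) ≤ f D)
    (hBA : B ⊆ A) : γ ^ #(A \ B) * f B ≤ f A := by
  suffices h : ∀ s ⊆ A \ B, γ ^ #s * f B ≤ f (B ∪ s) by
    simpa [union_sdiff_of_subset hBA] using h (A \ B) subset_rfl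
  intro s
  induction s using Finset.induction_on with
  | empty => simp
  | insert a s ha ih =>
    intro hs
    have haB : a ∉ B := (mem_sdiff.1 (hs (mem_insert_self a s))).2
    have hD : B ∪ insert a s ⊆ A := union_subset hBA fun x hx => (mem_sdiff.1 (hs hx)).1
    have herase : (B ∪ insert a s).erase a = B ∪ s := by
      rw [erase_union_distrib, erase_eq_of_notMem haB, erase_insert ha]
    calc γ ^ #(insert a s) * f B = γ * (γ ^ #s * f B) := by rw [card_insert_of_notMem ha]; ring
      _ ≤ γ * f (B ∪ s) := mul_le_mul_of_nonneg_left (ih ((subset_insert a s).trans hs)) hγ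
      _ ≤ f (B ∪ insert a s) := herase ▸ hf _ hD a (by simp)

section Walks

variable {V : Type*} [Fintype V] [DecidableEq V] (G : SimpleGraph V) [DecidableRel G.Adj]

def walksFrom : ℕ → V → Finset (List V)
  | 0, v => {[v]}
  | k + 1, v => (G.neighborFinset v).biUnion fun w => (walksFrom k w).image (List.cons v)

/-- The walks with `j` vertices before `v` and `k` after it. -/
def walksThrough (j k : ℕ) (v : V) : Finset (List V) :=
  (walksFrom G j v ×ˢ walksFrom G k v).image fun pq => pq.1.tail.reverse ++ pq.2

def walksThroughFirstHalf (v : V) (n : ℕ) : Finset (List V) :=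
  {l ∈ (range n).biUnion fun j => walksThrough G j (2 * n - 1 - j) v |
    l.length = 2 * n ∧ v ∈ l.take n}

variable {G} {A : Finset V} {β : Type*} {φ : V → β} {a b : List V} {v : V}

theorem card_walksFrom_le (k : ℕ) (v : V) : #(walksFrom G k v) ≤ G.maxDegree ^ k := by
  induction k generalizing v with
  | zero => simp [walksFrom]
  | succ k ih =>
    calc #(walksFrom G (k + 1) v)
        ≤ ∑ w ∈ G.neighborFinset v, #((walksFrom G k w).image (List.cons v)) := card_biUnion_le
      _ ≤ ∑ _w ∈ G.neighborFinset v, G.maxDegree ^ k :=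
          sum_le_sum fun w _ => card_image_le.trans (ih w)
      _ = G.degree v * G.maxDegree ^ k := by
          rw [sum_const, card_neighborFinset_eq_degree, smul_eq_mul]
      _ ≤ G.maxDegree ^ (k + 1) := by
          rw [pow_succ']; exact Nat.mul_le_mul_right _ (G.degree_le_maxDegree v)

theorem cons_mem_walksFrom {l : List V} (h : (v :: l).IsChain G.Adj) :
    v :: l ∈ walksFrom G l.length v := by
  induction l generalizing v with
  | nil => simp [walksFrom]
  | cons w l ih =>
    rw [List.isChain_cons_cons] at h
    simp only [walksFrom, List.length_cons, mem_biUnion, mem_neighborFinset, mem_image,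
      List.cons.injEq, true_and]
    exact ⟨w, h.1, _, ih h.2, rfl⟩

theorem card_walksThrough_le (j k : ℕ) (v : V) :
    #(walksThrough G j k v) ≤ G.maxDegree ^ (j + k) := by
  refine card_image_le.trans ?_
  rw [card_product, pow_add]
  exact Nat.mul_le_mul (card_walksFrom_le j v) (card_walksFrom_le k v)

theorem append_cons_mem_walksThrough {p q : List V} (h : (p ++ v :: q).IsChain G.Adj) :
    p ++ v :: q ∈ walksThrough G p.length q.length v := by
  have hp : (p ++ [v]).IsChain G.Adj := by
    rw [show p ++ v :: q = (p ++ [v]) ++ q by simp] at h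
    exact h.left_of_append
  have hp' : (v :: p.reverse).IsChain G.Adj := by
    rw [show v :: p.reverse = (p ++ [v]).reverse by simp, List.isChain_reverse]
    exact hp.imp fun _ _ h => h.symm
  refine mem_image.2 ⟨(v :: p.reverse, v :: q), mem_product.2 ⟨?_, ?_⟩, by simp⟩
  · simpa using cons_mem_walksFrom hp'
  · exact cons_mem_walksFrom h.right_of_append

theorem card_walksThroughFirstHalf_le (v : V) (n : ℕ) :
    #(walksThroughFirstHalf G v n) ≤ n * G.maxDegree ^ (2 * n - 1) := by
  calc #(walksThroughFirstHalf G v n)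
      ≤ ∑ j ∈ range n, #(walksThrough G j (2 * n - 1 - j) v) := 
        (card_filter_le _ _).trans card_biUnion_le
    _ ≤ ∑ _j ∈ range n, G.maxDegree ^ (2 * n - 1) := sum_le_sum fun j hj =>
        (card_walksThrough_le j _ v).trans_eq (by have := mem_range.1 hj; congr 1; omega)
    _ = n * G.maxDegree ^ (2 * n - 1) := by simp

theorem IsSquareIn.append_mem_walksThroughFirstHalf (h : IsSquareIn G A φ a b) (hv : v ∈ a) :
    a ++ b ∈ walksThroughFirstHalf G v a.length := by
  have hlen := h.length_eq
  have htake : v ∈ (a ++ b).take a.length := by rwa [List.take_left]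
  obtain ⟨p, q, rfl⟩ := List.append_of_mem hv
  have hqb : (q ++ b).length = 2 * (p ++ v :: q).length - 1 - p.length := by
    simp only [List.length_append, List.length_cons] at hlen ⊢
    omega
  refine mem_filter.2
    ⟨mem_biUnion.2 ⟨p.length, mem_range.2 (by simp), ?_⟩, by simp [← hlen]; ring, htake⟩
  rw [← hqb, List.append_assoc, List.cons_append]
  exact append_cons_mem_walksThrough (by simpa using h.2.1)

end Walks

section Extensions

variable {V : Type*} [Fintype V] [DecidableEq V] (G : SimpleGraph V) (L : V → Finset ℕ)
  (A : Finset V) (v : V)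

local notation "𝒞" => listColorings G L

noncomputable def squareExtensions (a b : List V) : Finset ((V → ℕ) × ℕ) :=
  open Classical in
  {p ∈ 𝒞 (A.erase v) ×ˢ L v | IsSquareIn G A (Function.update p.1 v p.2) a b}

noncomputable def badExtensions : Finset ((V → ℕ) × ℕ) :=
  open Classical in
  {p ∈ 𝒞 (A.erase v) ×ˢ L v | ¬ NonrepetitiveOn G A (Function.update p.1 v p.2)}

variable {G L A v} {a b : List V} {ψ : V → ℕ} {c : ℕ} {γ : ℝ}

theorem mem_squareExtensions :
    (ψ, c) ∈ squareExtensions G L A v a b ↔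
      ψ ∈ 𝒞 (A.erase v) ∧ c ∈ L v ∧ IsSquareIn G A (Function.update ψ v c) a b := by
  classical
  simp [squareExtensions, and_assoc]

theorem mem_badExtensions :
    (ψ, c) ∈ badExtensions G L A v ↔ ψ ∈ 𝒞 (A.erase v) ∧ c ∈ L v ∧
      ¬ NonrepetitiveOn G A (Function.update ψ v c) := by
  classical
  simp [badExtensions, and_assoc]

theorem exists_card_squareExtensions_le (hva : v ∈ a)
    (hne : (squareExtensions G L A v a b).Nonempty) :
    ∃ S ⊆ A.erase v, #S = a.length - 1 ∧
      #(squareExtensions G L A v a b) ≤ #(𝒞 (A.erase v \ S)) := by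
  obtain ⟨⟨ψ₀, c₀⟩, h₀⟩ := hne
  have hsq := (mem_squareExtensions.1 h₀).2.2
  obtain ⟨j, hj⟩ := List.mem_iff_getElem?.1 hva
  have hjb : j < b.length := hsq.length_eq ▸ (List.getElem?_eq_some_iff.1 hj).1
  set w := b[j]
  refine ⟨b.toFinset.erase w, fun u hu => ?_, ?_, ?_⟩
  · have hub := List.mem_toFinset.1 (mem_of_mem_erase hu)
    exact mem_erase.2 ⟨(hsq.ne_of_mem hva hub).symm, hsq.2.2.2.1 u (List.mem_append_right a hub)⟩
  · rw [card_erase_of_mem (List.mem_toFinset.2 (List.getElem_mem hjb)),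
      List.toFinset_card_of_nodup (List.nodup_append.1 hsq.2.2.1).2.1, hsq.length_eq]
  refine card_le_card_of_injOn (fun p => (A.erase v \ b.toFinset.erase w).piecewise p.1 0)
    (fun p hp => piecewise_mem_listColorings (mem_squareExtensions.1 hp).1 sdiff_subset) ?_
  rintro ⟨ψ₁, c₁⟩ hp₁ ⟨ψ₂, c₂⟩ hp₂ heq
  obtain ⟨hψ₁, -, hsq₁⟩ := mem_squareExtensions.1 hp₁
  obtain ⟨hψ₂, -, hsq₂⟩ := mem_squareExtensions.1 hp₂
  have hoff : ∀ u ∉ b.toFinset.erase w, ψ₁ u = ψ₂ u := by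
    intro u hu
    by_cases hA : u ∈ A.erase v
    · simpa [hA, hu] using congrFun heq u
    · rw [(mem_listColorings.1 hψ₁).2.1 u hA, (mem_listColorings.1 hψ₂).2.1 u hA]
  obtain ⟨rfl, rfl⟩ := hsq₁.update_injective hj (List.getElem?_eq_getElem hjb) hsq₂ hoff
  rfl

theorem card_squareExtensions_mul_pow_le (hγ : 0 ≤ γ)
    (hA : ∀ D ⊂ A, ∀ u ∈ D, γ * #(𝒞 (D.erase u)) ≤ #(𝒞 D)) (hv : v ∈ A) (hva : v ∈ a) :
    #(squareExtensions G L A v a b) * γ ^ (a.length - 1) ≤ #(𝒞 (A.erase v)) := by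
  rcases (squareExtensions G L A v a b).eq_empty_or_nonempty with hemp | hne
  · simp [hemp]
  obtain ⟨S, hS, hcard, hle⟩ := exists_card_squareExtensions_le hva hne
  have hpow := pow_card_sdiff_mul_le (f := fun D => (#(𝒞 D) : ℝ)) hγ
    (fun D hD u hu => hA D (hD.trans_ssubset (erase_ssubset hv)) u hu)
    (sdiff_subset : A.erase v \ S ⊆ A.erase v)
  rw [Finset.sdiff_sdiff_eq_self hS, hcard] at hpow
  calc (#(squareExtensions G L A v a b) : ℝ) * γ ^ (a.length - 1)
      ≤ #(𝒞 (A.erase v \ S)) * γ ^ (a.length - 1) := by gcongr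
    _ ≤ #(𝒞 (A.erase v)) := by linarith

theorem exists_isSquareIn_of_mem_badExtensions (h : (ψ, c) ∈ badExtensions G L A v) :
    ∃ a b, IsSquareIn G A (Function.update ψ v c) a b ∧ v ∈ a := by
  obtain ⟨hψ, -, hbad⟩ := mem_badExtensions.1 h
  obtain ⟨a, b, hsq⟩ : ∃ a b, IsSquareIn G A (Function.update ψ v c) a b := by
    simpa [NonrepetitiveOn] using hbad
  have hvab : v ∈ a ++ b := by
    by_contra hv
    have hA : ∀ x ∈ a ++ b, x ∈ A.erase v := fun x hx =>
      mem_erase.2 ⟨by rintro rfl; exact hv hx, hsq.2.2.2.1 x hx⟩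
    have hsq' : IsSquareIn G (A.erase v) (Function.update ψ v c) a b :=
      ⟨hsq.1, hsq.2.1, hsq.2.2.1, hA, hsq.2.2.2.2⟩
    exact (mem_listColorings.1 hψ).2.2 a b
      (hsq'.congr fun x hx => Function.update_of_ne (ne_of_mem_erase hx) c ψ)
  rcases List.mem_append.1 hvab with hva | hvb
  · exact ⟨a, b, hsq, hva⟩
  · exact ⟨b.reverse, a.reverse, hsq.reverse, List.mem_reverse.2 hvb⟩

theorem card_product_le_card_add_card_badExtensions (hv : v ∈ A) :
    #(𝒞 (A.erase v) ×ˢ L v) ≤ #(𝒞 A) + #(badExtensions G L A v) := by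
  classical
  rw [← card_filter_add_card_filter_not (s := 𝒞 (A.erase v) ×ˢ L v)
    (fun p => NonrepetitiveOn G A (Function.update p.1 v p.2))]
  gcongr
  · refine card_le_card_of_injOn _ (fun p hp => ?_)
      (injOn_update_listColorings.mono (filter_subset _ _))
    obtain ⟨hp, hnr⟩ := mem_filter.1 hp
    exact update_mem_listColorings (mem_product.1 hp).1 (mem_product.1 hp).2 hv hnr
  · intro p hp
    obtain ⟨hp, hnr⟩ := mem_filter.1 hp
    exact mem_badExtensions.2 ⟨(mem_product.1 hp).1, (mem_product.1 hp).2, hnr⟩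

end Extensions

section Counting

variable {V : Type*} [Fintype V] [DecidableEq V] {G : SimpleGraph V} [DecidableRel G.Adj]
  {L : V → Finset ℕ} {A : Finset V} {v : V} {k : ℕ} {γ : ℝ}

local notation "𝒞" => listColorings G L

theorem badExtensions_subset :
    badExtensions G L A v ⊆ (Icc 1 (Fintype.card V)).biUnion fun n =>
      (walksThroughFirstHalf G v n).biUnion fun l =>
        squareExtensions G L A v (l.take n) (l.drop n) := by
  rintro ⟨ψ, c⟩ h
  obtain ⟨a, b, hsq, hva⟩ := exists_isSquareIn_of_mem_badExtensions h
  obtain ⟨hψ, hc, -⟩ := mem_badExtensions.1 h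
  have hcard : (a ++ b).length ≤ Fintype.card V := hsq.2.2.1.length_le_card
  have hpos : 0 < a.length := List.length_pos_iff.2 hsq.1
  simp only [List.length_append, ← hsq.length_eq] at hcard
  refine mem_biUnion.2 ⟨a.length, mem_Icc.2 ⟨hpos, by omega⟩,
    mem_biUnion.2 ⟨a ++ b, hsq.append_mem_walksThroughFirstHalf hva, ?_⟩⟩
  rw [List.take_left, List.drop_left]
  exact mem_squareExtensions.2 ⟨hψ, hc, hsq⟩

theorem card_badExtensions_le (hγ : 0 < γ)
    (hA : ∀ D ⊂ A, ∀ u ∈ D, γ * #(𝒞 (D.erase u)) ≤ #(𝒞 D)) (hv : v ∈ A) :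
    (#(badExtensions G L A v) : ℝ) ≤ (∑ n ∈ Icc 1 (Fintype.card V),
      n * (G.maxDegree : ℝ) ^ (2 * n - 1) / γ ^ (n - 1)) * #(𝒞 (A.erase v)) := by
  have hterm : ∀ n ∈ Icc 1 (Fintype.card V), ∀ l ∈ walksThroughFirstHalf G v n,
      (#(squareExtensions G L A v (l.take n) (l.drop n)) : ℝ) ≤ #(𝒞 (A.erase v)) / γ ^ (n - 1) := by
    intro n _ l hl
    obtain ⟨-, hlen, hvl⟩ := mem_filter.1 hl
    have htake : (l.take n).length = n := by simp [hlen]; omega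
    have := card_squareExtensions_mul_pow_le (b := l.drop n) hγ.le hA hv hvl
    rwa [htake, ← le_div_iff₀ (by positivity)] at this
  calc (#(badExtensions G L A v) : ℝ)
      ≤ ∑ n ∈ Icc 1 (Fintype.card V), ∑ l ∈ walksThroughFirstHalf G v n,
          (#(squareExtensions G L A v (l.take n) (l.drop n)) : ℝ) := by
        exact_mod_cast (card_le_card badExtensions_subset).trans
          (card_biUnion_le.trans (sum_le_sum fun n _ => card_biUnion_le))
    _ ≤ ∑ n ∈ Icc 1 (Fintype.card V), ∑ l ∈ walksThroughFirstHalf G v n,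
          (#(𝒞 (A.erase v)) : ℝ) / γ ^ (n - 1) := sum_le_sum fun n hn => sum_le_sum (hterm n hn)
    _ ≤ ∑ n ∈ Icc 1 (Fintype.card V),
          (n * (G.maxDegree : ℝ) ^ (2 * n - 1)) * (#(𝒞 (A.erase v)) / γ ^ (n - 1)) := by
        simp only [sum_const, nsmul_eq_mul]
        gcongr with n
        exact_mod_cast card_walksThroughFirstHalf_le v n
    _ = _ := by
        rw [sum_mul]
        exact sum_congr rfl fun n _ => by ring

theorem mul_card_listColorings_erase_le (hγ : 0 < γ) (hk : ∀ u, k ≤ #(L u))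
    (hγk : γ + ∑ n ∈ Icc 1 (Fintype.card V),
      n * (G.maxDegree : ℝ) ^ (2 * n - 1) / γ ^ (n - 1) ≤ k) (A : Finset V) :
    ∀ v ∈ A, γ * #(𝒞 (A.erase v)) ≤ #(𝒞 A) := by
  induction A using Finset.strongInduction with
  | H A ih =>
  intro v hv
  set σ := ∑ n ∈ Icc 1 (Fintype.card V), n * (G.maxDegree : ℝ) ^ (2 * n - 1) / γ ^ (n - 1)
  have hsplit : (#(𝒞 (A.erase v)) : ℝ) * #(L v) ≤ #(𝒞 A) + #(badExtensions G L A v) := by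
    exact_mod_cast card_product (𝒞 (A.erase v)) (L v) ▸
      card_product_le_card_add_card_badExtensions hv
  have hbad : (#(badExtensions G L A v) : ℝ) ≤ σ * #(𝒞 (A.erase v)) :=
    card_badExtensions_le hγ ih hv
  have hkL : (k : ℝ) ≤ #(L v) := by exact_mod_cast hk v
  calc γ * #(𝒞 (A.erase v)) ≤ (k - σ) * #(𝒞 (A.erase v)) := by gcongr; linarith
    _ ≤ #(L v) * #(𝒞 (A.erase v)) - σ * #(𝒞 (A.erase v)) := by rw [sub_mul]; gcongr
    _ ≤ #(𝒞 A) := by linarith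

theorem listColorings_univ_nonempty (hγ : 1 ≤ γ) (hk : ∀ u, k ≤ #(L u))
    (hγk : γ + ∑ n ∈ Icc 1 (Fintype.card V),
      n * (G.maxDegree : ℝ) ^ (2 * n - 1) / γ ^ (n - 1) ≤ k) :
    (𝒞 univ).Nonempty := by
  have hpow := pow_card_sdiff_mul_le (f := fun D => (#(𝒞 D) : ℝ)) (by linarith)
    (fun D _ => mul_card_listColorings_erase_le (by linarith) hk hγk D) (empty_subset univ)
  have hempty : (1 : ℝ) ≤ #(𝒞 ∅) := by
    exact_mod_cast card_pos.2 ⟨0, zero_mem_listColorings_empty⟩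
  have hγpow : (1 : ℝ) ≤ γ ^ #(univ \ (∅ : Finset V)) := one_le_pow₀ hγ
  rw [← card_pos, ← Nat.cast_pos (α := ℝ)]
  nlinarith

end Counting

section Choosability

variable {V : Type*} (G : SimpleGraph V)

def IsThueChoosable (k : ℕ) : Prop :=
  ∀ L : V → Finset ℕ, (∀ v, k ≤ (L v).card) →
    ∃ φ : V → ℕ, (∀ v, φ v ∈ L v) ∧ Nonrepetitive G φ

variable {G} {k : ℕ}

theorem Nonrepetitive.of_comp {β β' : Type*} {φ : V → β} (f : β → β')
    (h : Nonrepetitive G (f ∘ φ)) : Nonrepetitive G φ := by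
  intro u v p hp l hl hsupp
  refine h p hp (l.map f) (by simpa using hl) ?_
  rw [← List.map_map, hsupp, List.map_append]

theorem thueChoiceNumber_le (h : IsThueChoosable G k) : thueChoiceNumber G ≤ k :=
  Nat.sInf_le h

theorem thueNumber_le_of_isThueChoosable (h : IsThueChoosable G k) : thueNumber G ≤ k := by
  obtain ⟨φ, hφ, hnr⟩ := h (fun _ => range k) (by simp)
  refine Nat.sInf_le ⟨fun v => ⟨φ v, mem_range.1 (hφ v)⟩, ?_⟩
  exact hnr.of_comp Fin.val

theorem thueNumber_le_thueChoiceNumber (h : IsThueChoosable G k) :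
    thueNumber G ≤ thueChoiceNumber G :=
  thueNumber_le_of_isThueChoosable (Nat.sInf_mem (s := {k | IsThueChoosable G k}) ⟨k, h⟩)

theorem isThueChoosable_of_sum_le [Fintype V] [DecidableRel G.Adj] {γ : ℝ} (hγ : 1 ≤ γ)
    (hγk : γ + ∑ n ∈ Icc 1 (Fintype.card V),
      n * (G.maxDegree : ℝ) ^ (2 * n - 1) / γ ^ (n - 1) ≤ k) :
    IsThueChoosable G k := by
  classical
  intro L hk
  obtain ⟨φ, hφ⟩ := listColorings_univ_nonempty hγ hk hγk
  obtain ⟨hL, -, hnr⟩ := mem_listColorings.1 hφ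
  exact ⟨φ, fun v => hL v (mem_univ v), hnr.nonrepetitive⟩

end Choosability

theorem sum_Icc_mul_pow_div_pow_le {Δ γ : ℝ} (hΔ : 0 < Δ) (hγ : Δ ^ 2 < γ) (M : ℕ) :
    ∑ n ∈ Icc 1 M, n * Δ ^ (2 * n - 1) / γ ^ (n - 1) ≤ Δ * γ ^ 2 / (γ - Δ ^ 2) ^ 2 := by
  have hγ0 : 0 < γ := (by positivity : 0 < Δ ^ 2).trans hγ
  have hγΔ : γ - Δ ^ 2 ≠ 0 := by linarith
  set r := Δ ^ 2 / γ with hr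
  have hr0 : 0 ≤ r := by positivity
  have hr1 : r < 1 := (div_lt_one hγ0).2 hγ
  have hterm : ∀ n ∈ Icc 1 M, n * Δ ^ (2 * n - 1) / γ ^ (n - 1) = γ / Δ * (n * r ^ n) := by
    intro n hn
    obtain ⟨m, rfl⟩ : ∃ m, n = m + 1 := ⟨n - 1, by have := (mem_Icc.1 hn).1; omega⟩
    rw [hr, div_pow, ← pow_mul, show 2 * (m + 1) - 1 = 2 * m + 1 by omega, Nat.add_sub_cancel]
    field_simp
    ring
  have hgeom : ∑ n ∈ Icc 1 M, (n : ℝ) * r ^ n ≤ r / (1 - r) ^ 2 :=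
    sum_le_hasSum _ (fun n _ => by positivity)
      (hasSum_coe_mul_geometric_of_norm_lt_one (by rwa [Real.norm_of_nonneg hr0]))
  rw [sum_congr rfl hterm, ← mul_sum]
  calc γ / Δ * ∑ n ∈ Icc 1 M, (n : ℝ) * r ^ n ≤ γ / Δ * (r / (1 - r) ^ 2) := by gcongr
    _ = Δ * γ ^ 2 / (γ - Δ ^ 2) ^ 2 := by
        rw [hr, one_sub_div hγ0.ne']
        field_simp

theorem exists_sum_le_dujmovic {Δ : ℝ} (hΔ : 1 < Δ) (M : ℕ) : ∃ γ : ℝ, 1 ≤ γ ∧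
    γ + ∑ n ∈ Icc 1 M, n * Δ ^ (2 * n - 1) / γ ^ (n - 1) ≤
      (1 + 1 / (Δ ^ ((1 : ℝ) / 3) - 1) + 1 / Δ ^ ((1 : ℝ) / 3)) * Δ ^ 2 := by
  set s := Δ ^ ((1 : ℝ) / 3)
  have hs : 1 < s := Real.one_lt_rpow hΔ (by norm_num)
  have hs3 : s ^ 3 = Δ := by
    rw [← Real.rpow_natCast, ← Real.rpow_mul (by linarith)]
    norm_num
  have hs1 : s - 1 ≠ 0 := by linarith
  have hγΔ : Δ ^ 2 < (1 + 1 / (s - 1)) * Δ ^ 2 := by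
    have : 0 < 1 / (s - 1) := by bound
    nlinarith [pow_pos (by linarith : (0 : ℝ) < Δ) 2]
  -- for this `γ`, `Δ² / γ = (s - 1) / s`, and the series sums to at most `Δ² / s`
  refine ⟨(1 + 1 / (s - 1)) * Δ ^ 2, by nlinarith, ?_⟩
  calc _ ≤ (1 + 1 / (s - 1)) * Δ ^ 2 + Δ * ((1 + 1 / (s - 1)) * Δ ^ 2) ^ 2 /
        ((1 + 1 / (s - 1)) * Δ ^ 2 - Δ ^ 2) ^ 2 := by
        gcongr
        exact sum_Icc_mul_pow_div_pow_le (by linarith) hγΔ M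
    _ = (1 + 1 / (s - 1) + 1 / s) * Δ ^ 2 := by
        rw [← hs3]
        field_simp
        ring

theorem thue_le_thueChoice_le_dujmovic {V : Type} [Fintype V]
    (G : SimpleGraph V) [DecidableRel G.Adj] (hΔ : 1 < G.maxDegree) :
    thueNumber G ≤ thueChoiceNumber G ∧
    (thueChoiceNumber G : ℤ) ≤
      ⌈(1 + 1 / ((G.maxDegree : ℝ) ^ ((1 : ℝ) / 3) - 1)
          + 1 / ((G.maxDegree : ℝ) ^ ((1 : ℝ) / 3))) * (G.maxDegree : ℝ) ^ 2⌉ := by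
  obtain ⟨γ, hγ, hbound⟩ := exists_sum_le_dujmovic (Δ := G.maxDegree) (by exact_mod_cast hΔ)
    (Fintype.card V)
  set bound := (1 + 1 / ((G.maxDegree : ℝ) ^ ((1 : ℝ) / 3) - 1)
    + 1 / ((G.maxDegree : ℝ) ^ ((1 : ℝ) / 3))) * (G.maxDegree : ℝ) ^ 2
  have hbound_nonneg : 0 ≤ bound := by
    have : 0 ≤ ∑ n ∈ Icc 1 (Fintype.card V),
        n * (G.maxDegree : ℝ) ^ (2 * n - 1) / γ ^ (n - 1) := sum_nonneg fun n _ => by positivity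
    linarith
  have hk : bound ≤ (⌈bound⌉.toNat : ℝ) :=
    (Int.le_ceil bound).trans (by exact_mod_cast Int.self_le_toNat ⌈bound⌉)
  have hchoosable := isThueChoosable_of_sum_le (G := G) hγ (hbound.trans hk)
  refine ⟨thueNumber_le_thueChoiceNumber hchoosable, ?_⟩
  calc (thueChoiceNumber G : ℤ) ≤ ⌈bound⌉.toNat := by exact_mod_cast thueChoiceNumber_le hchoosable
    _ = ⌈bound⌉ := Int.toNat_of_nonneg (Int.ceil_nonneg hbound_nonneg)
end

section
/- Every cycle is nonrepetitively 5-choosable: for every n ≥ 3, the cycle graph C_n satisfies π_ℓ(C_n) ≤ 5. -/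
open SimpleGraph

/-!
Following Rosenfeld's counting method, let `W k` (`squareFreeWords L k`) be the square-free
words of length `k` whose `i`-th letter is taken from the list `L i`. A one-letter extension
of a word of `W k` that is not square-free ends in a square and is determined by what is left
after deleting the second half of that square, so `5 |W k| ≤ |W (k + 1)| + Σ_{j ≤ k} |W j|`,
and by induction `|W (k + 1)| ≥ 3 |W k|`; by symmetry the same holds for extensions to the left.

Reading a colouring of `C_n` around the cycle gives a word `w` of length `n`, and the colours
along a path form a factor of a rotation of `w` (after reversing the path if needed), so it
suffices to find `w ∈ W n` none of whose rotations starts with a square. Squares that do not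
wrap around the end of `w` are excluded by `w ∈ W n`. A wrapping square of half-length `t` has
`2t - 1` possible positions, and a word carrying it is determined by a factor of length `n - t`,
which extends in at least `3 ^ t` ways; hence at most `(2t - 1) |W n| / 3 ^ t` words of `W n`
carry such a square, and
`Σ_{1 ≤ t ≤ n/2} (2t - 1) / 3 ^ t < Σ_{t ≥ 1} (2t - 1) / 3 ^ t = 1`.
-/

open Finset
open scoped Fin.NatCast Fin.CommRing

/-- Inductively `2 (f 0 + ⋯ + f k) ≤ 3 f k`. -/
theorem three_mul_le_of_five_mul_le_add_sum {f : ℕ → ℕ}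
    (h : ∀ k, 5 * f k ≤ f (k + 1) + ∑ j ∈ range (k + 1), f j) (k : ℕ) :
    3 * f k ≤ f (k + 1) := by
  have hsum : ∀ k, 2 * ∑ j ∈ range (k + 1), f j ≤ 3 * f k := by
    intro k
    induction k with
    | zero => simp only [zero_add, sum_range_one]; omega
    | succ k ih =>
      rw [sum_range_succ]
      have := h k
      omega
  have := h k
  have := hsum k
  omega

theorem sum_Icc_mul_three_pow_lt (T : ℕ) :
    ∑ t ∈ Icc 1 T, (2 * t - 1) * 3 ^ (T - t) < 3 ^ T := by
  suffices ∀ T, ∑ t ∈ Icc 1 T, (2 * t - 1) * 3 ^ (T - t) + (T + 1) = 3 ^ T by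
    have := this T
    omega
  intro T
  induction T with
  | zero => simp
  | succ T ih =>
    have hshift : ∑ t ∈ Icc 1 T, (2 * t - 1) * 3 ^ (T + 1 - t) =
        3 * ∑ t ∈ Icc 1 T, (2 * t - 1) * 3 ^ (T - t) := by
      rw [mul_sum]
      refine sum_congr rfl fun t ht => ?_
      rw [show T + 1 - t = T - t + 1 by simp only [mem_Icc] at ht; omega, pow_succ]
      ring
    rw [sum_Icc_succ_top (by omega), hshift, Nat.sub_self, pow_zero, pow_succ]
    omega

namespace List

variable {α : Type*}

def HasSquare (w : List α) : Prop := ∃ l, l ≠ [] ∧ l ++ l <:+: w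

theorem HasSquare.mono {v w : List α} (hvw : v <:+: w) : v.HasSquare → w.HasSquare :=
  fun ⟨l, hl, hlv⟩ => ⟨l, hl, hlv.trans hvw⟩

theorem not_hasSquare_nil : ¬ ([] : List α).HasSquare :=
  fun ⟨_, hl, hlw⟩ => hl (append_eq_nil_iff.mp (infix_nil.mp hlw)).1

theorem hasSquare_reverse {w : List α} : w.reverse.HasSquare ↔ w.HasSquare := by
  suffices ∀ w : List α, w.HasSquare → w.reverse.HasSquare from
    ⟨fun h => by simpa using this _ h, this w⟩
  rintro w ⟨l, hl, hlw⟩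
  exact ⟨l.reverse, by simpa using hl, by simpa using reverse_infix.mpr hlw⟩

theorem HasSquare.exists_eq_append_of_append_singleton {w : List α} {x : α}
    (h : (w ++ [x]).HasSquare) (hw : ¬ w.HasSquare) :
    ∃ p l, l ≠ [] ∧ w ++ [x] = p ++ l ++ l := by
  obtain ⟨l, hl, p, s, hps⟩ := h
  rcases eq_nil_or_concat s with rfl | ⟨s, y, rfl⟩
  · exact ⟨p, l, hl, by simpa using hps.symm⟩
  · rw [concat_eq_append, ← append_assoc] at hps
    exact absurd ⟨l, hl, p, s, append_inj_left' hps rfl⟩ hw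

def HasCyclicSquare (w : List α) : Prop := ∃ r l, l ≠ [] ∧ l ++ l <+: w.rotate r

theorem IsPrefix.isInfix_of_rotate {v w : List α} {r : ℕ} (h : v <+: w.rotate r)
    (hr : r + v.length ≤ w.length) : v <:+: w := by
  rw [rotate_eq_drop_append_take (by omega)] at h
  have hv : v <+: w.drop r :=
    prefix_of_prefix_length_le h (prefix_append _ _) (by simp only [length_drop]; omega)
  exact hv.isInfix.trans (drop_suffix r w).isInfix

theorem HasCyclicSquare.exists_wrapping {w : List α} (h : w.HasCyclicSquare)
    (hw : ¬ w.HasSquare) : ∃ r l, l ≠ [] ∧ r < w.length ∧ w.length < r + 2 * l.length ∧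
      l ++ l <+: w.rotate r := by
  obtain ⟨r, l, hl, hpre⟩ := h
  have hln : 2 * l.length ≤ w.length := by simpa [two_mul] using hpre.length_le
  have hl0 := length_pos_iff.mpr hl
  rw [← rotate_mod] at hpre
  refine ⟨r % w.length, l, hl, Nat.mod_lt _ (by omega), ?_, hpre⟩
  by_contra! h
  exact hw ⟨l, hl, hpre.isInfix_of_rotate (by simp only [length_append]; omega)⟩

end List

section SquareFreeWords

variable {α : Type*}

open Classical in
noncomputable def squareFreeWords (L : ℕ → Finset α) : ℕ → Finset (List α)
  | 0 => {[]}
  | k + 1 => (image₂ (fun w x => w ++ [x]) (squareFreeWords L k) (L k)).filter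
      (¬ List.HasSquare ·)

variable {L : ℕ → Finset α}

theorem mem_squareFreeWords {k : ℕ} {w : List α} :
    w ∈ squareFreeWords L k ↔
      w.length = k ∧ (∀ i (hi : i < w.length), w[i] ∈ L i) ∧ ¬ w.HasSquare := by
  induction k generalizing w with
  | zero =>
    simp only [squareFreeWords, mem_singleton, List.length_eq_zero_iff]
    constructor
    · rintro rfl
      exact ⟨rfl, by simp, List.not_hasSquare_nil⟩
    · exact fun h => h.1
  | succ k ih =>
    simp only [squareFreeWords, mem_filter, mem_image₂, ih]
    constructor
    · rintro ⟨⟨v, ⟨hv, hvL, -⟩, x, hx, rfl⟩, hsq⟩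
      refine ⟨by simp [hv], fun i hi => ?_, hsq⟩
      rw [List.getElem_append]
      split_ifs with h
      · exact hvL i h
      · simp only [List.length_append, List.length_singleton] at hi
        simpa [show i = k by omega] using hx
    · rintro ⟨hw, hwL, hsq⟩
      obtain ⟨v, x, rfl⟩ : ∃ v x, w = v ++ [x] := by
        rcases List.eq_nil_or_concat w with rfl | ⟨v, x, rfl⟩
        · simp at hw
        · exact ⟨v, x, List.concat_eq_append ..⟩
      simp only [List.length_append, List.length_singleton] at hw
      have hvsq : ¬ v.HasSquare := fun h => hsq (h.mono (List.prefix_append _ _).isInfix)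
      refine ⟨⟨v, ⟨by omega, fun i hi => ?_, hvsq⟩, x, ?_, rfl⟩, hsq⟩
      · have := hwL i (by simp; omega)
        rwa [List.getElem_append_left hi] at this
      · simpa [show v.length = k by omega] using hwL v.length (by simp)

theorem card_squareFreeWords_zero : #(squareFreeWords L 0) = 1 := rfl

theorem drop_take_mem_squareFreeWords {n a k : ℕ} {w : List α}
    (hw : w ∈ squareFreeWords L n) (hak : a + k ≤ n) :
    (w.drop a).take k ∈ squareFreeWords (fun i => L (a + i)) k := by
  obtain ⟨hlen, hwL, hsq⟩ := mem_squareFreeWords.mp hw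
  refine mem_squareFreeWords.mpr ⟨by simp; omega, fun i hi => ?_, fun h => hsq (h.mono ?_)⟩
  · simpa using hwL (a + i) (by simp at hi; omega)
  · exact (List.take_prefix _ _).isInfix.trans (List.drop_suffix _ _).isInfix

theorem take_mem_squareFreeWords {n k : ℕ} {w : List α} (hw : w ∈ squareFreeWords L n)
    (hk : k ≤ n) : w.take k ∈ squareFreeWords L k := by
  simpa using drop_take_mem_squareFreeWords hw (a := 0) (by omega)

theorem card_mul_card_le_card_succ_add_sum (k : ℕ) :
    #(squareFreeWords L k) * #(L k) ≤
      #(squareFreeWords L (k + 1)) + ∑ j ∈ range (k + 1), #(squareFreeWords L j) := by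
  classical
  set E := image₂ (fun w x => w ++ [x]) (squareFreeWords L k) (L k)
  have hE : #E = #(squareFreeWords L k) * #(L k) :=
    card_image₂ (f := fun (w : List α) x => w ++ [x])
      (fun _ _ _ _ h => (List.append_inj' h rfl).imp_right List.singleton_inj.mp) _ _
  have hcover : E.filter List.HasSquare ⊆ (range (k + 1)).biUnion fun j =>
      (squareFreeWords L j).image fun u => u ++ u.drop (2 * j - (k + 1)) := by
    intro v hv
    obtain ⟨hvE, hsq⟩ := mem_filter.mp hv
    obtain ⟨w, hw, x, -, rfl⟩ := mem_image₂.mp hvE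
    obtain ⟨hwlen, -, hwsq⟩ := mem_squareFreeWords.mp hw
    obtain ⟨p, l, hl, hpl⟩ := hsq.exists_eq_append_of_append_singleton hwsq
    have hlen := congrArg List.length hpl
    have hl0 := List.length_pos_iff.mpr hl
    simp only [List.length_append, List.length_singleton] at hlen
    have htake : w.take (p.length + l.length) = p ++ l := by
      rw [← List.take_append_of_le_length (l₂ := [x]) (by omega), hpl, ← List.length_append,
        List.take_left]
    refine mem_biUnion.mpr ⟨p.length + l.length, mem_range.mpr (by omega), mem_image.mpr
      ⟨p ++ l, htake ▸ take_mem_squareFreeWords hw (by omega), ?_⟩⟩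
    rw [hpl, show 2 * (p.length + l.length) - (k + 1) = p.length by omega]
    simp
  have hW : squareFreeWords L (k + 1) = E.filter (¬ List.HasSquare ·) := rfl
  calc #(squareFreeWords L k) * #(L k)
      = #(E.filter (¬ List.HasSquare ·)) + #(E.filter List.HasSquare) := by
        rw [← hE, add_comm, card_filter_add_card_filter_not]
    _ ≤ #(squareFreeWords L (k + 1)) + ∑ j ∈ range (k + 1), #(squareFreeWords L j) := by
        rw [hW]
        gcongr
        exact (card_le_card hcover).trans
          (card_biUnion_le.trans (sum_le_sum fun j _ => card_image_le))

theorem squareFreeWords_congr {L' : ℕ → Finset α} {k : ℕ} (h : ∀ i < k, L i = L' i) :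
    squareFreeWords L k = squareFreeWords L' k := by
  ext w
  simp only [mem_squareFreeWords]
  constructor <;> rintro ⟨hlen, hwL, hsq⟩ <;> refine ⟨hlen, fun i hi => ?_, hsq⟩
  · exact h i (hlen ▸ hi) ▸ hwL i hi
  · exact (h i (hlen ▸ hi)).symm ▸ hwL i hi

theorem reverse_mem_squareFreeWords {k : ℕ} {w : List α} (hw : w ∈ squareFreeWords L k) :
    w.reverse ∈ squareFreeWords (fun i => L (k - 1 - i)) k := by
  obtain ⟨hlen, hwL, hsq⟩ := mem_squareFreeWords.mp hw
  refine mem_squareFreeWords.mpr ⟨by simpa, fun i hi => ?_, by rwa [List.hasSquare_reverse]⟩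
  simp only [List.length_reverse] at hi
  simpa [hlen] using hwL (w.length - 1 - i) (by omega)

theorem card_squareFreeWords_reverse (k : ℕ) :
    #(squareFreeWords L k) = #(squareFreeWords (fun i => L (k - 1 - i)) k) := by
  refine card_nbij' List.reverse List.reverse (fun w hw => reverse_mem_squareFreeWords hw)
    (fun w hw => ?_) (fun w _ => List.reverse_reverse w) (fun w _ => List.reverse_reverse w)
  have := reverse_mem_squareFreeWords hw
  rwa [squareFreeWords_congr fun i hi => congrArg L (by omega : k - 1 - (k - 1 - i) = i)] at this

open Classical in
theorem filter_hasCyclicSquare_subset (n : ℕ) :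
    (squareFreeWords L n).filter List.HasCyclicSquare ⊆
      (Icc 1 (n / 2)).biUnion fun t => (Ioo (n - 2 * t) n).biUnion fun r =>
        (squareFreeWords L n).filter
          fun w => ∃ l : List α, l.length = t ∧ l ++ l <+: w.rotate r := by
  intro w hw
  obtain ⟨hwW, hcyc⟩ := mem_filter.mp hw
  obtain ⟨hlen, -, hsq⟩ := mem_squareFreeWords.mp hwW
  obtain ⟨r, l, hl, hr, hwrap, hpre⟩ := hcyc.exists_wrapping hsq
  have hln : 2 * l.length ≤ n := by simpa [← hlen, two_mul] using hpre.length_le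
  have hl0 := List.length_pos_iff.mpr hl
  simp only [mem_biUnion, mem_Icc, mem_Ioo]
  exact ⟨l.length, ⟨hl0, by omega⟩, r, ⟨by omega, by omega⟩,
    mem_filter.mpr ⟨hwW, l, rfl, hpre⟩⟩

variable (hL : ∀ i, 5 ≤ #(L i))
include hL

theorem three_mul_card_squareFreeWords_le (k : ℕ) :
    3 * #(squareFreeWords L k) ≤ #(squareFreeWords L (k + 1)) :=
  three_mul_le_of_five_mul_le_add_sum (f := fun k => #(squareFreeWords L k)) (fun k =>
    le_trans (by rw [mul_comm]; exact Nat.mul_le_mul_left _ (hL k))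
      (card_mul_card_le_card_succ_add_sum k)) k

theorem three_pow_mul_card_squareFreeWords_le (k e : ℕ) :
    3 ^ e * #(squareFreeWords L k) ≤ #(squareFreeWords L (k + e)) := by
  induction e with
  | zero => simp
  | succ e ih =>
    rw [pow_succ', mul_assoc, ← add_assoc]
    exact (Nat.mul_le_mul_left 3 ih).trans (three_mul_card_squareFreeWords_le hL _)

/-- Extend to the right, then, after reversing all words, to the left. -/
theorem three_pow_mul_card_squareFreeWords_shift_le {a k n : ℕ} (h : a + k ≤ n) :
    3 ^ (n - k) * #(squareFreeWords (fun i => L (a + i)) k) ≤ #(squareFreeWords L n) := by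
  set R : ℕ → Finset α := fun i => L (n - 1 - i)
  have hright := three_pow_mul_card_squareFreeWords_le (fun i => hL (a + i)) k (n - a - k)
  have hleft := three_pow_mul_card_squareFreeWords_le (L := R) (fun i => hL _) (n - a) a
  have hrev : #(squareFreeWords (fun i => L (a + i)) (n - a)) = #(squareFreeWords R (n - a)) := by
    rw [card_squareFreeWords_reverse, squareFreeWords_congr (L' := R) fun i hi =>
      congrArg L (by omega : a + (n - a - 1 - i) = n - 1 - i)]
  rw [show k + (n - a - k) = n - a by omega, hrev] at hright
  rw [show n - a + a = n by omega, ← card_squareFreeWords_reverse] at hleft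
  calc 3 ^ (n - k) * #(squareFreeWords (fun i => L (a + i)) k)
      = 3 ^ a * (3 ^ (n - a - k) * #(squareFreeWords (fun i => L (a + i)) k)) := by
        rw [← mul_assoc, ← pow_add, show a + (n - a - k) = n - k by omega]
    _ ≤ #(squareFreeWords L n) := (Nat.mul_le_mul_left _ hright).trans hleft

theorem three_pow_mul_card_le_of_rotate_eq_take_append {n t a : ℕ} {S : Finset (List α)}
    (hS : S ⊆ squareFreeWords L n) (hat : a ≤ t) (htn : t ≤ n) (g : List α → List α)
    (hg : ∀ w ∈ S, w.rotate a = (w.rotate a).take (n - t) ++ g ((w.rotate a).take (n - t))) :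
    3 ^ t * #S ≤ #(squareFreeWords L n) := by
  have hmaps : ∀ w ∈ S,
      (w.rotate a).take (n - t) ∈ squareFreeWords (fun i => L (a + i)) (n - t) := by
    intro w hw
    have hlen := (mem_squareFreeWords.mp (hS hw)).1
    rw [List.rotate_eq_drop_append_take (by omega),
      List.take_append_of_le_length (by simp; omega)]
    exact drop_take_mem_squareFreeWords (hS hw) (by omega)
  have hinj : Set.InjOn (fun w : List α => (w.rotate a).take (n - t)) S := by
    intro w hw w' hw' h
    refine (List.rotate_eq_rotate (n := a)).mp ?_
    rw [hg w hw, hg w' hw', show (w.rotate a).take (n - t) = _ from h]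
  calc 3 ^ t * #S
      ≤ 3 ^ (n - (n - t)) * #(squareFreeWords (fun i => L (a + i)) (n - t)) := by
        rw [show n - (n - t) = t by omega]
        exact Nat.mul_le_mul_left _ (card_le_card_of_injOn _ hmaps hinj)
    _ ≤ #(squareFreeWords L n) := three_pow_mul_card_squareFreeWords_shift_le hL (by omega)

/-- A word carrying a square of half-length `t` at a cyclic position `r` where it wraps around
the end is determined by the complement of the half containing the wrap point, which is a
factor of the word of length `n - t`. -/
theorem three_pow_mul_card_filter_prefix_rotate_le {n t r : ℕ} (htn : 2 * t ≤ n) (hr : r < n)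
    (hwrap : n < r + 2 * t)
    [DecidablePred fun w : List α => ∃ l, l.length = t ∧ l ++ l <+: w.rotate r] :
    3 ^ t * #((squareFreeWords L n).filter
      fun w => ∃ l : List α, l.length = t ∧ l ++ l <+: w.rotate r) ≤
      #(squareFreeWords L n) := by
  set S := (squareFreeWords L n).filter
    fun w => ∃ l : List α, l.length = t ∧ l ++ l <+: w.rotate r
  have hS : S ⊆ squareFreeWords L n := filter_subset _ _
  have hdecomp : ∀ w ∈ S, ∃ l q : List α, l.length = t ∧ q.length = n - 2 * t ∧
      ∀ a m, r + m = a + n → w.rotate a = (l ++ l ++ q).rotate m := by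
    intro w hw
    obtain ⟨hwS, l, hl, q, hq⟩ := mem_filter.mp hw
    have hlen := (mem_squareFreeWords.mp hwS).1
    have hqlen := congrArg List.length hq
    simp only [List.length_append, List.length_rotate] at hqlen
    refine ⟨l, q, hl, by omega, fun a m h => ?_⟩
    rw [hq, List.rotate_rotate, h, add_comm, ← List.rotate_rotate, ← hlen, List.rotate_length]
  by_cases hrt : r + t ≤ n
  · refine three_pow_mul_card_le_of_rotate_eq_take_append hL hS (a := r + 2 * t - n) (by omega)
      (by omega) (fun u : List α => u.drop (n - 2 * t)) fun w hw => ?_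
    obtain ⟨l, q, hl, hq, hrot⟩ := hdecomp w hw
    rw [hrot _ (2 * t) (by omega), show 2 * t = (l ++ l).length by simp; omega,
      List.rotate_append_length_eq, ← List.append_assoc, List.take_left' (by simp; omega),
      List.drop_left' (by simp; omega)]
  · refine three_pow_mul_card_le_of_rotate_eq_take_append hL hS (a := r + t - n) (by omega)
      (by omega) (fun u : List α => u.take t) fun w hw => ?_
    obtain ⟨l, q, hl, hq, hrot⟩ := hdecomp w hw
    rw [hrot _ t (by omega), List.append_assoc, ← hl, List.rotate_append_length_eq,
      List.take_left' (by simp; omega), List.take_left]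

theorem exists_mem_squareFreeWords_not_hasCyclicSquare (n : ℕ) :
    ∃ w ∈ squareFreeWords L n, ¬ w.HasCyclicSquare := by
  classical
  set W := squareFreeWords L n
  set T := n / 2
  set B : ℕ → ℕ → Finset (List α) := fun t r =>
    W.filter fun w => ∃ l : List α, l.length = t ∧ l ++ l <+: w.rotate r
  have hcover := filter_hasCyclicSquare_subset (L := L) n
  have hB : ∀ t ∈ Icc 1 T, ∀ r ∈ Ioo (n - 2 * t) n,
      3 ^ T * #(B t r) ≤ 3 ^ (T - t) * #W := by
    intro t ht r hr
    simp only [mem_Icc, mem_Ioo] at ht hr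
    rw [show 3 ^ T = 3 ^ (T - t) * 3 ^ t by rw [← pow_add]; congr 1; omega, mul_assoc]
    exact Nat.mul_le_mul_left _
      (three_pow_mul_card_filter_prefix_rotate_le hL (by omega) hr.2 (by omega))
  have hW : 0 < #W := by
    have := three_pow_mul_card_squareFreeWords_le hL 0 n
    rw [card_squareFreeWords_zero, mul_one, zero_add] at this
    exact (pow_pos (by norm_num) n).trans_le this
  have hbad : 3 ^ T * #(W.filter List.HasCyclicSquare) < 3 ^ T * #W :=
    calc 3 ^ T * #(W.filter List.HasCyclicSquare)
        ≤ ∑ t ∈ Icc 1 T, ∑ r ∈ Ioo (n - 2 * t) n, 3 ^ T * #(B t r) := by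
          simp only [← mul_sum]
          exact Nat.mul_le_mul_left _ ((card_le_card hcover).trans
            (card_biUnion_le.trans (sum_le_sum fun t _ => card_biUnion_le)))
      _ ≤ ∑ t ∈ Icc 1 T, ∑ r ∈ Ioo (n - 2 * t) n, 3 ^ (T - t) * #W :=
          sum_le_sum fun t ht => sum_le_sum fun r hr => hB t ht r hr
      _ = (∑ t ∈ Icc 1 T, (2 * t - 1) * 3 ^ (T - t)) * #W := by
          rw [sum_mul]
          refine sum_congr rfl fun t ht => ?_
          rw [sum_const, Nat.card_Ioo, smul_eq_mul, mul_assoc]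
          simp only [mem_Icc] at ht
          congr 1
          omega
      _ < 3 ^ T * #W := Nat.mul_lt_mul_of_pos_right (sum_Icc_mul_three_pow_lt T) hW
  obtain ⟨w, hw, hgood⟩ :=
    exists_mem_notMem_of_card_lt_card (lt_of_mul_lt_mul_left hbad (Nat.zero_le _))
  exact ⟨w, hw, fun h => hgood (mem_filter.mpr ⟨hw, h⟩)⟩

end SquareFreeWords

section CycleGraph

variable {n : ℕ} [NeZero n]

theorem sub_eq_one_or_sub_eq_neg_one_of_cycleGraph_adj {u v : Fin n}
    (h : (cycleGraph n).Adj u v) : v - u = 1 ∨ v - u = -1 := by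
  have hone : ∀ x : Fin n, x.val = 1 → x = 1 := fun x hx =>
    Fin.ext (by rw [hx, Fin.val_one', Nat.mod_eq_of_lt (hx ▸ x.isLt)])
  rcases cycleGraph_adj'.mp h with h | h
  · exact Or.inr (by rw [← neg_sub, hone _ h])
  · exact Or.inl (hone _ h)

/-- Two opposite consecutive steps would revisit a vertex. -/
theorem SimpleGraph.Walk.IsPath.exists_getVert_cycleGraph {u v : Fin n}
    {p : (cycleGraph n).Walk u v} (hp : p.IsPath) :
    ∃ δ : Fin n, (δ = 1 ∨ δ = -1) ∧
      ∀ i ≤ p.length, p.getVert i = u + (i : Fin n) * δ := by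
  set s : ℕ → Fin n := fun i => p.getVert (i + 1) - p.getVert i
  have hs : ∀ i < p.length, s i = 1 ∨ s i = -1 := fun i hi =>
    sub_eq_one_or_sub_eq_neg_one_of_cycleGraph_adj (p.adj_getVert_succ hi)
  obtain ⟨δ, hδ, hs0⟩ :
      ∃ δ : Fin n, (δ = 1 ∨ δ = -1) ∧ (0 < p.length → s 0 = δ) := by
    by_cases h0 : 0 < p.length
    · exact ⟨s 0, hs 0 h0, fun _ => rfl⟩
    · exact ⟨1, Or.inl rfl, fun h => absurd h h0⟩
  have hsδ : ∀ i < p.length, s i = δ := by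
    intro i hi
    induction i with
    | zero => exact hs0 hi
    | succ i ih =>
      have hback : s (i + 1) ≠ -δ := by
        intro h
        have h1 : p.getVert (i + 1) = p.getVert i + δ := by
          rw [← ih (by omega)]
          simp [s]
        have h2 : p.getVert (i + 2) = p.getVert i := by
          have : p.getVert (i + 2) = p.getVert (i + 1) + s (i + 1) := by simp [s]
          rw [this, h1, h]
          abel
        exact absurd (hp.getVert_injOn (by simp; omega) (by simp; omega) h2) (by omega)
      rcases hs (i + 1) hi with h | h <;> rcases hδ with rfl | rfl <;> simp_all
  refine ⟨δ, hδ, fun i hi => ?_⟩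
  induction i with
  | zero => simp
  | succ i ih =>
    rw [Nat.cast_succ, add_mul, one_mul, ← add_assoc, ← ih (by omega), ← hsδ i (by omega)]
    simp [s]

variable {α : Type*}

theorem map_support_prefix_rotate_of_getVert_eq_add {φ : Fin n → α} {u v : Fin n}
    {p : (cycleGraph n).Walk u v} (hp : p.IsPath) (hu : ∀ i ≤ p.length, p.getVert i = u + i) :
    p.support.map φ <+: (List.ofFn φ).rotate u := by
  have hlen : p.length < n := by simpa using hp.length_lt
  rw [List.prefix_iff_eq_take]
  refine List.ext_getElem (by simp; omega) fun i hi _ => ?_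
  simp only [List.length_map, Walk.length_support] at hi
  rw [List.getElem_map, Walk.support_getElem_eq_getVert, hu i (by omega), List.getElem_take,
    List.getElem_rotate, List.getElem_ofFn]
  congr 1
  ext
  simp [Fin.val_add, Nat.add_mod, add_comm]

theorem nonrepetitive_cycleGraph {φ : Fin n → α} (hφ : ¬ (List.ofFn φ).HasCyclicSquare) :
    Nonrepetitive (cycleGraph n) φ := by
  intro u v p hp l hl hpl
  obtain ⟨δ, hδ | hδ, hstep⟩ := hp.exists_getVert_cycleGraph
  · refine hφ ⟨u, l, hl, hpl ▸ map_support_prefix_rotate_of_getVert_eq_add hp ?_⟩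
    simpa [hδ] using hstep
  · have hrev : ∀ i ≤ p.reverse.length, p.reverse.getVert i = v + i := by
      intro i hi
      rw [Walk.length_reverse] at hi
      have hsub : ∀ m, i ≤ m →
          u + ((m - i : ℕ) : Fin n) * δ = u + (m : Fin n) * δ + i := by
        intro m hm
        rw [Nat.cast_sub hm, hδ]
        ring
      rw [Walk.getVert_reverse, hstep _ (by omega), hsub _ hi, ← hstep _ le_rfl,
        p.getVert_length]
    refine hφ ⟨v, l.reverse, by simpa using hl, ?_⟩
    have := map_support_prefix_rotate_of_getVert_eq_add (φ := φ) hp.reverse hrev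
    rwa [Walk.support_reverse, List.map_reverse, hpl, List.reverse_append] at this

end CycleGraph

theorem thueChoice_cycleGraph (n : ℕ) (hn : 3 ≤ n) :
    thueChoiceNumber (cycleGraph n) ≤ 5 := by
  have : NeZero n := ⟨by omega⟩
  refine Nat.sInf_le fun L hL => ?_
  obtain ⟨w, hw, hcyc⟩ :=
    exists_mem_squareFreeWords_not_hasCyclicSquare (L := fun i : ℕ => L i) (fun i => hL _) n
  obtain ⟨rfl, hwL, -⟩ := mem_squareFreeWords.mp hw
  refine ⟨fun v => w[(v : ℕ)], fun v => by simpa using hwL v v.isLt,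
    nonrepetitive_cycleGraph ?_⟩
  rwa [List.ofFn_getElem]
end
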